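/- (Gini's gamma for the bivariate normal copula.) For every ρ ∈ (−1,1), define γ(ρ) = 4·(∫₀¹ C(u,u;ρ) du + ∫₀¹ C(u,1−u;ρ) du − 1/2), where C(u,v;ρ) = Φ₂(Φ⁻¹(u),Φ⁻¹(v);ρ). Then γ(ρ) = (2/π)·(arcsin((1+ρ)/2) − arcsin((1−ρ)/2)), and equivalently γ(ρ) = (4/π)·(arcsin(√(1+ρ)/2) − arcsin(√(1−ρ)/2)). -/

import Mathlib

open MeasureTheory Real Set

/-- Standard normal density φ. -/
noncomputable def stdPdf (x : ℝ) : ℝ :=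
  (1 / Real.sqrt (2 * Real.pi)) * Real.exp (-x ^ 2 / 2)

/-- Standard normal distribution function Φ. -/
noncomputable def stdCdf (h : ℝ) : ℝ := ∫ x in Set.Iio h, stdPdf x

/-- Inverse Φ⁻¹ of the standard normal distribution function (on (0,1)). -/
noncomputable def stdQuantile : ℝ → ℝ := Function.invFun stdCdf

/-- Bivariate standard normal density φ₂ with correlation ρ. -/
noncomputable def binPdf (x y ρ : ℝ) : ℝ :=
  (1 / (2 * Real.pi * Real.sqrt (1 - ρ ^ 2))) *
    Real.exp (-(x ^ 2 - 2 * ρ * x * y + y ^ 2) / (2 * (1 - ρ ^ 2)))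

/-- Bivariate standard normal distribution function Φ₂. -/
noncomputable def binCdf (h k ρ : ℝ) : ℝ :=
  ∫ x in Set.Iio h, ∫ y in Set.Iio k, binPdf x y ρ

/-- The bivariate normal copula C(u,v;ρ) = Φ₂(Φ⁻¹(u),Φ⁻¹(v);ρ). -/
noncomputable def normCopula (u v ρ : ℝ) : ℝ :=
  binCdf (stdQuantile u) (stdQuantile v) ρ

/-- g(u;ρ) = Φ(√((1−ρ)/(1+ρ))·Φ⁻¹(u)). -/
noncomputable def gFun (u ρ : ℝ) : ℝ :=
  stdCdf (Real.sqrt ((1 - ρ) / (1 + ρ)) * stdQuantile u)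

/-!
Substituting `u = Φ(z)`, the two copula integrals become `A(ρ) = ∫ φ(z) Φ₂(z,z;ρ) dz`
and `1/2 - A(-ρ)`, the latter because `Φ₂(z,-z;ρ) = Φ(z) - Φ₂(z,z;-ρ)`. Writing
`Φ₂(h,k;ρ) = ∫_{x<h} φ(x) Φ((k - ρx)/√(1-ρ²)) dx`, the `ρ`-derivative of the integrand
is the `x`-derivative of `φ₂(x,k;ρ)`, which gives Plackett's identity `∂Φ₂/∂ρ = φ₂`.
Hence `A'(ρ) = ∫ φ(z) φ₂(z,z;ρ) dz = 1/(2π√((1-ρ)(3+ρ)))`, a Gaussian integral, which is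
also the derivative of `1/4 + arcsin((1+ρ)/2)/(2π)`; both sides equal `1/3` at `ρ = 0`,
where `Φ₂` factorises. The second form is the double-angle formula
`cos (2 arcsin (√x/2)) = 1 - x/2`.
-/

open Filter Topology ProbabilityTheory

lemma stdPdf_eq_gaussianPDFReal : stdPdf = gaussianPDFReal 0 1 := by
  ext x
  simp [stdPdf, gaussianPDFReal, one_div]

lemma stdPdf_pos (x : ℝ) : 0 < stdPdf x := by
  unfold stdPdf; positivity

lemma stdPdf_nonneg (x : ℝ) : 0 ≤ stdPdf x := (stdPdf_pos x).le

lemma stdPdf_le (x : ℝ) : stdPdf x ≤ 1 / √(2 * π) := by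
  unfold stdPdf
  refine mul_le_of_le_one_right (by positivity) (exp_le_one_iff.2 ?_)
  nlinarith [sq_nonneg x]

lemma stdPdf_neg (x : ℝ) : stdPdf (-x) = stdPdf x := by
  simp [stdPdf]

@[fun_prop]
lemma continuous_stdPdf : Continuous stdPdf := by
  unfold stdPdf; fun_prop

lemma integrable_stdPdf : Integrable stdPdf := by
  rw [stdPdf_eq_gaussianPDFReal]; exact integrable_gaussianPDFReal 0 1

lemma integral_stdPdf : ∫ x, stdPdf x = 1 := by
  rw [stdPdf_eq_gaussianPDFReal]; exact integral_gaussianPDFReal_eq_one 0 one_ne_zero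

lemma integrable_mul_stdPdf : Integrable fun x => x * stdPdf x := by
  have := (integrable_mul_exp_neg_mul_sq (b := 1 / 2) (by norm_num)).const_mul (1 / √(2 * π))
  refine this.congr (.of_forall fun x => ?_)
  simp only [stdPdf]
  ring_nf

lemma tendsto_stdPdf_atBot : Tendsto stdPdf atBot (𝓝 0) := by
  have hsq : Tendsto (fun x : ℝ => -x ^ 2 / 2) atBot atBot := by
    have := ((tendsto_pow_atTop two_ne_zero).comp tendsto_neg_atBot_atTop).atTop_div_const
      (zero_lt_two : (0 : ℝ) < 2)
    simpa [Function.comp_def, neg_div] using tendsto_neg_atTop_atBot.comp this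
  have := (tendsto_exp_atBot.comp hsq).const_mul (1 / √(2 * π))
  rwa [mul_zero] at this

lemma stdCdf_eq_integral_Iic (h : ℝ) : stdCdf h = ∫ x in Iic h, stdPdf x :=
  setIntegral_congr_set Iio_ae_eq_Iic

lemma stdCdf_eq_cdf : stdCdf = cdf (gaussianReal 0 1) := by
  ext h
  rw [cdf_eq_real, measureReal_def, gaussianReal_apply_eq_integral _ one_ne_zero,
    ENNReal.toReal_ofReal (setIntegral_nonneg measurableSet_Iic fun x _ =>
      gaussianPDFReal_nonneg 0 1 x), stdCdf_eq_integral_Iic, stdPdf_eq_gaussianPDFReal]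

lemma stdCdf_nonneg (h : ℝ) : 0 ≤ stdCdf h := by
  rw [stdCdf_eq_cdf]; exact cdf_nonneg _ h

lemma stdCdf_le_one (h : ℝ) : stdCdf h ≤ 1 := by
  rw [stdCdf_eq_cdf]; exact cdf_le_one _ h

lemma tendsto_stdCdf_atBot : Tendsto stdCdf atBot (𝓝 0) := by
  rw [stdCdf_eq_cdf]; exact tendsto_cdf_atBot _

lemma tendsto_stdCdf_atTop : Tendsto stdCdf atTop (𝓝 1) := by
  rw [stdCdf_eq_cdf]; exact tendsto_cdf_atTop _

lemma stdCdf_sub_stdCdf (a b : ℝ) : stdCdf b - stdCdf a = ∫ x in a..b, stdPdf x := by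
  rw [stdCdf_eq_integral_Iic, stdCdf_eq_integral_Iic, intervalIntegral.integral_Iic_sub_Iic
    integrable_stdPdf.integrableOn integrable_stdPdf.integrableOn]

lemma hasDerivAt_stdCdf (h : ℝ) : HasDerivAt stdCdf (stdPdf h) h := by
  have : stdCdf = fun b => stdCdf 0 + ∫ x in (0 : ℝ)..b, stdPdf x := by
    ext b; rw [← stdCdf_sub_stdCdf]; ring
  rw [this]
  exact (intervalIntegral.integral_hasDerivAt_right integrable_stdPdf.intervalIntegrable
    (continuous_stdPdf.stronglyMeasurableAtFilter _ _) continuous_stdPdf.continuousAt).const_add _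

@[fun_prop]
lemma continuous_stdCdf : Continuous stdCdf :=
  continuous_iff_continuousAt.2 fun h => (hasDerivAt_stdCdf h).continuousAt

lemma strictMono_stdCdf : StrictMono stdCdf := fun a b hab => by
  have := intervalIntegral.intervalIntegral_pos_of_pos integrable_stdPdf.intervalIntegrable
    stdPdf_pos hab
  linarith [stdCdf_sub_stdCdf a b]

lemma range_stdCdf : range stdCdf = Ioo 0 1 := by
  refine Subset.antisymm ?_ fun y ⟨hy0, hy1⟩ => ?_
  · rintro _ ⟨z, rfl⟩
    exact ⟨(stdCdf_nonneg (z - 1)).trans_lt (strictMono_stdCdf (by linarith)),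
      (strictMono_stdCdf (lt_add_one z)).trans_le (stdCdf_le_one (z + 1))⟩
  · obtain ⟨a, ha⟩ := (tendsto_stdCdf_atBot.eventually_lt_const hy0).exists
    obtain ⟨b, hb⟩ := (tendsto_stdCdf_atTop.eventually_const_lt hy1).exists
    exact intermediate_value_univ a b continuous_stdCdf ⟨ha.le, hb.le⟩

lemma stdQuantile_stdCdf (z : ℝ) : stdQuantile (stdCdf z) = z :=
  Function.leftInverse_invFun strictMono_stdCdf.injective z

lemma stdCdf_stdQuantile {u : ℝ} (hu : u ∈ Ioo 0 1) : stdCdf (stdQuantile u) = u := by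
  rw [← range_stdCdf] at hu
  obtain ⟨z, rfl⟩ := hu
  rw [stdQuantile_stdCdf]

lemma stdCdf_neg (z : ℝ) : stdCdf (-z) = 1 - stdCdf z := by
  have hsymm : ∫ x in Iic (-z), stdPdf x = ∫ x in Ioi z, stdPdf x := by
    simpa [stdPdf_neg] using integral_comp_neg_Iic (-z) stdPdf
  rw [stdCdf_eq_integral_Iic, stdCdf_eq_integral_Iic, hsymm, ← integral_stdPdf,
    ← intervalIntegral.integral_Iic_add_Ioi integrable_stdPdf.integrableOn
      integrable_stdPdf.integrableOn (b := z)]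
  ring

lemma integral_comp_stdQuantile (F : ℝ → ℝ) :
    ∫ u in (0 : ℝ)..1, F (stdQuantile u) = ∫ z, stdPdf z * F z := by
  rw [intervalIntegral.integral_of_le zero_le_one, integral_Ioc_eq_integral_Ioo,
    ← range_stdCdf, ← image_univ,
    integral_image_eq_integral_abs_deriv_smul MeasurableSet.univ
      (fun z _ => (hasDerivAt_stdCdf z).hasDerivWithinAt) strictMono_stdCdf.injective.injOn,
    Measure.restrict_univ]
  simp only [smul_eq_mul, stdQuantile_stdCdf, abs_of_pos (stdPdf_pos _)]

lemma integral_stdPdf_mul_comp_stdCdf (g : ℝ → ℝ) :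
    ∫ z, stdPdf z * g (stdCdf z) = ∫ u in (0 : ℝ)..1, g u := by
  rw [← integral_comp_stdQuantile, intervalIntegral.integral_of_le zero_le_one,
    intervalIntegral.integral_of_le zero_le_one, integral_Ioc_eq_integral_Ioo,
    integral_Ioc_eq_integral_Ioo]
  exact setIntegral_congr_fun measurableSet_Ioo fun u hu => by
    simp only [stdCdf_stdQuantile hu]

lemma norm_stdCdf_le_one (h : ℝ) : ‖stdCdf h‖ ≤ 1 := by
  rw [Real.norm_of_nonneg (stdCdf_nonneg h)]; exact stdCdf_le_one h

lemma integrable_abs_mul_stdPdf : Integrable fun x => |x| * stdPdf x :=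
  integrable_mul_stdPdf.abs.congr (.of_forall fun x => by
    simp only [abs_mul, abs_of_nonneg (stdPdf_nonneg x)])

lemma setIntegral_Iio_stdPdf_affine {s : ℝ} (hs : 0 < s) (m k : ℝ) :
    ∫ y in Iio k, stdPdf ((y - m) / s) / s = stdCdf ((k - m) / s) := by
  rw [setIntegral_congr_set Iio_ae_eq_Iic, integral_Iic_of_hasDerivAt_of_tendsto'
    (f := fun y => stdCdf ((y - m) / s)) (m := 0) _ _ _, sub_zero]
  · intro y _
    simpa [Function.comp_def, div_eq_mul_inv] using
      (hasDerivAt_stdCdf _).comp y (((hasDerivAt_id y).sub_const m).div_const s)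
  · exact ((integrable_stdPdf.comp_div hs.ne').comp_sub_right m).div_const s |>.integrableOn
  · exact tendsto_stdCdf_atBot.comp
      ((tendsto_atBot_add_const_right _ (-m) tendsto_id).atBot_div_const hs)

lemma one_sub_sq_pos_of_abs_lt_one {ρ : ℝ} (hρ : |ρ| < 1) : 0 < 1 - ρ ^ 2 :=
  sub_pos.2 ((sq_lt_one_iff_abs_lt_one ρ).2 hρ)

lemma binPdf_eq_stdPdf_mul {ρ : ℝ} (hρ : |ρ| < 1) (x y : ℝ) :
    binPdf x y ρ = stdPdf x * (stdPdf ((y - ρ * x) / √(1 - ρ ^ 2)) / √(1 - ρ ^ 2)) := by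
  have hs := one_sub_sq_pos_of_abs_lt_one hρ
  have hexp : -(x ^ 2 - 2 * ρ * x * y + y ^ 2) / (2 * (1 - ρ ^ 2)) =
      -x ^ 2 / 2 + -((y - ρ * x) / √(1 - ρ ^ 2)) ^ 2 / 2 := by
    rw [div_pow, sq_sqrt hs.le]
    field_simp
    ring
  rw [binPdf, stdPdf, stdPdf, hexp, exp_add]
  field_simp
  rw [sq_sqrt (by positivity)]

lemma binCdf_eq_integral {ρ : ℝ} (hρ : |ρ| < 1) (h k : ℝ) :
    binCdf h k ρ = ∫ x in Iio h, stdPdf x * stdCdf ((k - ρ * x) / √(1 - ρ ^ 2)) := by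
  have hs := sqrt_pos.2 (one_sub_sq_pos_of_abs_lt_one hρ)
  refine setIntegral_congr_fun measurableSet_Iio fun x _ => ?_
  simp_rw [binPdf_eq_stdPdf_mul hρ, integral_const_mul, setIntegral_Iio_stdPdf_affine hs]

lemma integrable_stdPdf_mul_stdCdf_affine (a b c : ℝ) :
    Integrable fun x => stdPdf x * stdCdf ((a - b * x) / c) :=
  integrable_stdPdf.mul_bdd (by fun_prop) (ae_of_all _ fun _ => norm_stdCdf_le_one _)

lemma binCdf_nonneg {ρ : ℝ} (hρ : |ρ| < 1) (h k : ℝ) : 0 ≤ binCdf h k ρ := by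
  rw [binCdf_eq_integral hρ]
  exact setIntegral_nonneg measurableSet_Iio fun x _ =>
    mul_nonneg (stdPdf_nonneg x) (stdCdf_nonneg _)

lemma binCdf_le_stdCdf {ρ : ℝ} (hρ : |ρ| < 1) (h k : ℝ) : binCdf h k ρ ≤ stdCdf h := by
  rw [binCdf_eq_integral hρ, stdCdf]
  exact setIntegral_mono (integrable_stdPdf_mul_stdCdf_affine _ _ _).integrableOn
    integrable_stdPdf.integrableOn fun x =>
      mul_le_of_le_one_right (stdPdf_nonneg x) (stdCdf_le_one _)

lemma binCdf_mono {ρ : ℝ} (hρ : |ρ| < 1) {h h' k k' : ℝ} (hh : h ≤ h') (hk : k ≤ k') :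
    binCdf h k ρ ≤ binCdf h' k' ρ := by
  rw [binCdf_eq_integral hρ, binCdf_eq_integral hρ]
  calc ∫ x in Iio h, stdPdf x * stdCdf ((k - ρ * x) / √(1 - ρ ^ 2))
      ≤ ∫ x in Iio h, stdPdf x * stdCdf ((k' - ρ * x) / √(1 - ρ ^ 2)) :=
        setIntegral_mono (integrable_stdPdf_mul_stdCdf_affine _ _ _).integrableOn
          (integrable_stdPdf_mul_stdCdf_affine _ _ _).integrableOn fun x =>
            mul_le_mul_of_nonneg_left (strictMono_stdCdf.monotone (by gcongr)) (stdPdf_nonneg x)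
    _ ≤ ∫ x in Iio h', stdPdf x * stdCdf ((k' - ρ * x) / √(1 - ρ ^ 2)) :=
        setIntegral_mono_set (integrable_stdPdf_mul_stdCdf_affine _ _ _).integrableOn
          (ae_of_all _ fun x => mul_nonneg (stdPdf_nonneg x) (stdCdf_nonneg _))
          (Iio_subset_Iio hh).eventuallyLE

lemma binCdf_zero (h k : ℝ) : binCdf h k 0 = stdCdf h * stdCdf k := by
  simp [binCdf_eq_integral (by simp : |(0 : ℝ)| < 1), integral_mul_const, stdCdf]

lemma binCdf_neg_right {ρ : ℝ} (hρ : |ρ| < 1) (h k : ℝ) :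
    binCdf h (-k) ρ = stdCdf h - binCdf h k (-ρ) := by
  have hρ' : |-ρ| < 1 := by rwa [abs_neg]
  have hpt : ∀ x, stdPdf x * stdCdf ((-k - ρ * x) / √(1 - ρ ^ 2)) =
      stdPdf x - stdPdf x * stdCdf ((k - -ρ * x) / √(1 - (-ρ) ^ 2)) := fun x => by
    rw [neg_sq, show (-k - ρ * x) / √(1 - ρ ^ 2) = -((k - -ρ * x) / √(1 - ρ ^ 2)) by ring,
      stdCdf_neg]
    ring
  rw [binCdf_eq_integral hρ, binCdf_eq_integral hρ', stdCdf,
    setIntegral_congr_fun measurableSet_Iio fun x _ => hpt x,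
    integral_sub integrable_stdPdf.integrableOn
      (integrable_stdPdf_mul_stdCdf_affine _ _ _).integrableOn]

lemma hasDerivAt_binPdf_fst (x k ρ : ℝ) :
    HasDerivAt (fun x => binPdf x k ρ) (binPdf x k ρ * ((ρ * k - x) / (1 - ρ ^ 2))) x := by
  have hq : HasDerivAt (fun x => -(x ^ 2 - 2 * ρ * x * k + k ^ 2) / (2 * (1 - ρ ^ 2)))
      ((ρ * k - x) / (1 - ρ ^ 2)) x :=
    ((((hasDerivAt_pow 2 x).sub (((hasDerivAt_id x).const_mul (2 * ρ)).mul_const k)).add_const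
      (k ^ 2)).neg.div_const (2 * (1 - ρ ^ 2))).congr_deriv (by simp [div_eq_mul_inv]; ring)
  simpa only [binPdf, mul_assoc] using hq.exp.const_mul (1 / (2 * π * √(1 - ρ ^ 2)))

lemma hasDerivAt_stdPdf_mul_stdCdf_rho {ρ : ℝ} (hρ : |ρ| < 1) (x k : ℝ) :
    HasDerivAt (fun r => stdPdf x * stdCdf ((k - r * x) / √(1 - r ^ 2)))
      (binPdf x k ρ * ((ρ * k - x) / (1 - ρ ^ 2))) ρ := by
  have hs := one_sub_sq_pos_of_abs_lt_one hρ
  have hsqrt := ((hasDerivAt_pow 2 ρ).const_sub 1).sqrt hs.ne'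
  have hz := (((hasDerivAt_id ρ).mul_const x).const_sub k).div hsqrt (sqrt_pos.2 hs).ne'
  refine (((hasDerivAt_stdCdf _).comp ρ hz).const_mul (stdPdf x)).congr_deriv ?_
  rw [binPdf_eq_stdPdf_mul hρ]
  have hne := (sqrt_pos.2 hs).ne'
  simp only [id, Pi.div_apply]
  field_simp
  rw [sq_sqrt hs.le]
  ring

lemma binPdf_nonneg (x y ρ : ℝ) : 0 ≤ binPdf x y ρ := by
  unfold binPdf; positivity

lemma continuous_binPdf_fst (k ρ : ℝ) : Continuous fun x => binPdf x k ρ :=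
  continuous_iff_continuousAt.2 fun x => (hasDerivAt_binPdf_fst x k ρ).continuousAt

lemma binPdf_le_of_abs_le {δ ρ : ℝ} (hδ : δ < 1) (hρ : |ρ| ≤ δ) (x y : ℝ) :
    binPdf x y ρ ≤ stdPdf x / (√(2 * π) * √(1 - δ ^ 2)) := by
  have hρ1 : |ρ| < 1 := hρ.trans_lt hδ
  have hδ0 : 0 < 1 - δ ^ 2 :=
    one_sub_sq_pos_of_abs_lt_one (abs_lt.2 ⟨by linarith [abs_nonneg ρ], hδ⟩)
  have hsq : √(1 - δ ^ 2) ≤ √(1 - ρ ^ 2) :=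
    sqrt_le_sqrt (by nlinarith [sq_abs ρ, abs_nonneg ρ])
  calc binPdf x y ρ
      = stdPdf x * (stdPdf ((y - ρ * x) / √(1 - ρ ^ 2)) / √(1 - ρ ^ 2)) :=
        binPdf_eq_stdPdf_mul hρ1 x y
    _ ≤ stdPdf x * (1 / √(2 * π) / √(1 - δ ^ 2)) :=
        mul_le_mul_of_nonneg_left (div_le_div₀ (by positivity) (stdPdf_le _)
          (sqrt_pos.2 hδ0) hsq) (stdPdf_nonneg x)
    _ = stdPdf x / (√(2 * π) * √(1 - δ ^ 2)) := by field_simp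

lemma norm_binPdf_mul_le {δ ρ : ℝ} (hδ : δ < 1) (hρ : |ρ| ≤ δ) (x k : ℝ) :
    ‖binPdf x k ρ * ((ρ * k - x) / (1 - ρ ^ 2))‖ ≤
      (|k| * stdPdf x + |x| * stdPdf x) / (√(2 * π) * √(1 - δ ^ 2) * (1 - δ ^ 2)) := by
  have hδ0 : 0 < 1 - δ ^ 2 :=
    one_sub_sq_pos_of_abs_lt_one (abs_lt.2 ⟨by linarith [abs_nonneg ρ], hδ⟩)
  have hρ0 : 1 - δ ^ 2 ≤ 1 - ρ ^ 2 := by nlinarith [sq_abs ρ, abs_nonneg ρ]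
  have hρk : |ρ * k| ≤ |k| := by
    rw [abs_mul]; exact mul_le_of_le_one_left (abs_nonneg k) (by linarith)
  have hnum : |ρ * k - x| ≤ |k| + |x| := by linarith [abs_sub (ρ * k) x]
  rw [norm_mul, norm_div, Real.norm_of_nonneg (binPdf_nonneg _ _ _), Real.norm_eq_abs,
    Real.norm_of_nonneg (by linarith)]
  calc binPdf x k ρ * (|ρ * k - x| / (1 - ρ ^ 2))
      ≤ stdPdf x / (√(2 * π) * √(1 - δ ^ 2)) * ((|k| + |x|) / (1 - δ ^ 2)) :=
        mul_le_mul (binPdf_le_of_abs_le hδ hρ x k) (div_le_div₀ (by positivity) hnum hδ0 hρ0)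
          (div_nonneg (abs_nonneg _) (by linarith)) (div_nonneg (stdPdf_nonneg x) (by positivity))
    _ = _ := by field_simp

lemma integrable_binPdf_mul {ρ : ℝ} (hρ : |ρ| < 1) (k : ℝ) :
    Integrable fun x => binPdf x k ρ * ((ρ * k - x) / (1 - ρ ^ 2)) :=
  (((integrable_stdPdf.const_mul _).add integrable_abs_mul_stdPdf).div_const _).mono'
    ((continuous_binPdf_fst k ρ).mul (by fun_prop)).aestronglyMeasurable
    (ae_of_all _ fun x => norm_binPdf_mul_le hρ le_rfl x k)

lemma tendsto_binPdf_fst_atBot {ρ : ℝ} (hρ : |ρ| < 1) (k : ℝ) :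
    Tendsto (fun x => binPdf x k ρ) atBot (𝓝 0) := by
  have := tendsto_stdPdf_atBot.div_const (√(2 * π) * √(1 - |ρ| ^ 2))
  rw [zero_div] at this
  exact squeeze_zero (fun x => binPdf_nonneg _ _ _)
    (fun x => binPdf_le_of_abs_le hρ le_rfl x k) this

lemma integral_Iio_binPdf_mul {ρ : ℝ} (hρ : |ρ| < 1) (h k : ℝ) :
    ∫ x in Iio h, binPdf x k ρ * ((ρ * k - x) / (1 - ρ ^ 2)) = binPdf h k ρ := by
  rw [setIntegral_congr_set Iio_ae_eq_Iic, integral_Iic_of_hasDerivAt_of_tendsto'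
    (fun x _ => hasDerivAt_binPdf_fst x k ρ) (integrable_binPdf_mul hρ k).integrableOn
    (tendsto_binPdf_fst_atBot hρ k), sub_zero]

lemma exists_lt_one_eventually_abs_le {ρ₀ : ℝ} (hρ₀ : |ρ₀| < 1) :
    ∃ δ < 1, ∀ᶠ ρ in 𝓝 ρ₀, |ρ| ≤ δ :=
  ⟨(1 + |ρ₀|) / 2, by linarith,
    (continuous_abs.tendsto ρ₀).eventually (eventually_le_nhds (by linarith))⟩

theorem hasDerivAt_binCdf_rho {ρ₀ : ℝ} (hρ₀ : |ρ₀| < 1) (h k : ℝ) :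
    HasDerivAt (fun ρ => binCdf h k ρ) (binPdf h k ρ₀) ρ₀ := by
  obtain ⟨δ, hδ, hnear⟩ := exists_lt_one_eventually_abs_le hρ₀
  obtain ⟨-, hderiv⟩ := hasDerivAt_integral_of_dominated_loc_of_deriv_le
    (μ := volume.restrict (Iio h)) (x₀ := ρ₀)
    (F := fun r x => stdPdf x * stdCdf ((k - r * x) / √(1 - r ^ 2)))
    (F' := fun r x => binPdf x k r * ((r * k - x) / (1 - r ^ 2)))
    (bound := fun x => (|k| * stdPdf x + |x| * stdPdf x) /
      (√(2 * π) * √(1 - δ ^ 2) * (1 - δ ^ 2)))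
    hnear (.of_forall fun r =>
      (integrable_stdPdf_mul_stdCdf_affine _ _ _).aestronglyMeasurable.restrict)
    (integrable_stdPdf_mul_stdCdf_affine _ _ _).integrableOn
    (integrable_binPdf_mul hρ₀ k).aestronglyMeasurable.restrict
    (ae_of_all _ fun x r hr => norm_binPdf_mul_le hδ hr x k)
    (((integrable_stdPdf.const_mul _).add integrable_abs_mul_stdPdf).div_const _).integrableOn
    (ae_of_all _ fun x r hr => hasDerivAt_stdPdf_mul_stdCdf_rho (hr.trans_lt hδ) x k)
  rw [integral_Iio_binPdf_mul hρ₀] at hderiv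
  exact hderiv.congr_of_eventuallyEq
    (hnear.mono fun r hr => binCdf_eq_integral (hr.trans_lt hδ) h k)

lemma integrable_stdPdf_mul_binCdf_self {ρ : ℝ} (hρ : |ρ| < 1) :
    Integrable fun z => stdPdf z * binCdf z z ρ := by
  have hmono : Monotone fun z => binCdf z z ρ := fun _ _ hz => binCdf_mono hρ hz hz
  refine integrable_stdPdf.mul_bdd (c := 1) hmono.measurable.aestronglyMeasurable
    (ae_of_all _ fun z => ?_)
  rw [Real.norm_of_nonneg (binCdf_nonneg hρ z z)]
  exact (binCdf_le_stdCdf hρ z z).trans (stdCdf_le_one z)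

lemma integral_stdPdf_mul_binPdf_self {ρ : ℝ} (hρ : |ρ| < 1) :
    ∫ z, stdPdf z * binPdf z z ρ = 1 / √((1 - ρ) * (3 + ρ)) / (2 * π) := by
  obtain ⟨h1, h2⟩ := abs_lt.1 hρ
  have hp : 0 < 1 + ρ := by linarith
  have hm : 0 < 1 - ρ := by linarith
  have h3 : 0 < 3 + ρ := by linarith
  have hpt : ∀ z, stdPdf z * binPdf z z ρ = 1 / (√(2 * π) * (2 * π * √(1 - ρ ^ 2))) *
      exp (-((3 + ρ) / (2 * (1 + ρ))) * z ^ 2) := fun z => by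
    have hexp : -z ^ 2 / 2 + -(z ^ 2 - 2 * ρ * z * z + z ^ 2) / (2 * (1 - ρ ^ 2)) =
        -((3 + ρ) / (2 * (1 + ρ))) * z ^ 2 := by
      rw [show 1 - ρ ^ 2 = (1 - ρ) * (1 + ρ) by ring]
      field_simp
      ring
    rw [stdPdf, binPdf, ← hexp, exp_add]
    ring
  have hsqrt_gauss :
      √(π / ((3 + ρ) / (2 * (1 + ρ)))) = √(2 * π) * √(1 + ρ) / √(3 + ρ) := by
    rw [← sqrt_mul (by positivity), ← sqrt_div (by positivity)]
    congr 1
    field_simp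
  rw [integral_congr_ae (ae_of_all _ hpt), integral_const_mul, integral_gaussian, hsqrt_gauss,
    show 1 - ρ ^ 2 = (1 - ρ) * (1 + ρ) by ring, sqrt_mul hm.le, sqrt_mul hm.le]
  have : 0 < √(1 + ρ) := sqrt_pos.2 hp
  have : 0 < √(1 - ρ) := sqrt_pos.2 hm
  have : 0 < √(3 + ρ) := sqrt_pos.2 h3
  field_simp

lemma hasDerivAt_integral_stdPdf_mul_binCdf_self {ρ₀ : ℝ} (hρ₀ : |ρ₀| < 1) :
    HasDerivAt (fun ρ => ∫ z, stdPdf z * binCdf z z ρ)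
      (∫ z, stdPdf z * binPdf z z ρ₀) ρ₀ := by
  obtain ⟨δ, hδ, hnear⟩ := exists_lt_one_eventually_abs_le hρ₀
  refine (hasDerivAt_integral_of_dominated_loc_of_deriv_le (x₀ := ρ₀)
    (F := fun r z => stdPdf z * binCdf z z r) (F' := fun r z => stdPdf z * binPdf z z r)
    (bound := fun z => stdPdf z * (1 / √(2 * π) / (√(2 * π) * √(1 - δ ^ 2))))
    hnear (hnear.mono fun r hr =>
      (integrable_stdPdf_mul_binCdf_self (hr.trans_lt hδ)).aestronglyMeasurable)
    (integrable_stdPdf_mul_binCdf_self hρ₀) (by unfold binPdf; fun_prop)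
    (ae_of_all _ fun z r hr => ?_) (integrable_stdPdf.mul_const _)
    (ae_of_all _ fun z r hr =>
      (hasDerivAt_binCdf_rho (hr.trans_lt hδ) z z).const_mul (stdPdf z))).2
  rw [Real.norm_of_nonneg (mul_nonneg (stdPdf_nonneg z) (binPdf_nonneg _ _ _))]
  exact mul_le_mul_of_nonneg_left ((binPdf_le_of_abs_le hδ hr z z).trans
    (div_le_div_of_nonneg_right (stdPdf_le z) (by positivity))) (stdPdf_nonneg z)

lemma hasDerivAt_arcsin_one_add_div_two {r : ℝ} (hr : |r| < 1) :
    HasDerivAt (fun r => arcsin ((1 + r) / 2)) (1 / √((1 - r) * (3 + r))) r := by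
  obtain ⟨h1, h2⟩ := abs_lt.1 hr
  have harcsin := (hasDerivAt_arcsin (x := (1 + r) / 2) (by linarith) (by linarith)).comp r
    (((hasDerivAt_id r).const_add 1).div_const 2)
  refine harcsin.congr_deriv ?_
  rw [show 1 - ((1 + r) / 2) ^ 2 = (1 - r) * (3 + r) / 2 ^ 2 by ring,
    sqrt_div' _ (by positivity : (0 : ℝ) ≤ 2 ^ 2), sqrt_sq zero_le_two]
  field_simp

lemma arcsin_one_half : arcsin (1 / 2) = π / 6 :=
  arcsin_eq_of_sin_eq (by rw [sin_pi_div_six]) ⟨by linarith [pi_pos], by linarith [pi_pos]⟩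

theorem integral_stdPdf_mul_binCdf_self {ρ : ℝ} (hρ : |ρ| < 1) :
    ∫ z, stdPdf z * binCdf z z ρ = 1 / 4 + arcsin ((1 + ρ) / 2) / (2 * π) := by
  have hA : ∀ r ∈ Ioo (-1 : ℝ) 1, HasDerivAt (fun ρ => ∫ z, stdPdf z * binCdf z z ρ)
      (1 / √((1 - r) * (3 + r)) / (2 * π)) r := fun r hr => by
    rw [← integral_stdPdf_mul_binPdf_self (abs_lt.2 hr)]
    exact hasDerivAt_integral_stdPdf_mul_binCdf_self (abs_lt.2 hr)
  have hR : ∀ r ∈ Ioo (-1 : ℝ) 1, HasDerivAt (fun ρ => 1 / 4 + arcsin ((1 + ρ) / 2) / (2 * π))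
      (1 / √((1 - r) * (3 + r)) / (2 * π)) r := fun r hr =>
    ((hasDerivAt_arcsin_one_add_div_two (abs_lt.2 hr)).div_const _).const_add _
  have hzero : ∫ z, stdPdf z * binCdf z z 0 = 1 / 4 + arcsin ((1 + 0) / 2) / (2 * π) := by
    simp_rw [binCdf_zero, ← sq]
    rw [integral_stdPdf_mul_comp_stdCdf (· ^ 2), integral_pow]
    norm_num [arcsin_one_half]
    field_simp
    norm_num
  exact isOpen_Ioo.eqOn_of_deriv_eq isPreconnected_Ioo
    (fun r hr => (hA r hr).differentiableAt.differentiableWithinAt)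
    (fun r hr => (hR r hr).differentiableAt.differentiableWithinAt)
    (fun r hr => (hA r hr).deriv.trans (hR r hr).deriv.symm)
    (by norm_num : (0 : ℝ) ∈ Ioo (-1) 1) hzero (abs_lt.1 hρ)

lemma stdQuantile_one_sub {u : ℝ} (hu : u ∈ Ioo 0 1) :
    stdQuantile (1 - u) = -stdQuantile u := by
  rw [← stdCdf_stdQuantile hu, ← stdCdf_neg, stdQuantile_stdCdf, stdQuantile_stdCdf]

lemma integral_normCopula_self (ρ : ℝ) :
    ∫ u in (0 : ℝ)..1, normCopula u u ρ = ∫ z, stdPdf z * binCdf z z ρ :=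
  integral_comp_stdQuantile fun z => binCdf z z ρ

lemma integral_normCopula_one_sub {ρ : ℝ} (hρ : |ρ| < 1) :
    ∫ u in (0 : ℝ)..1, normCopula u (1 - u) ρ =
      1 / 2 - ∫ z, stdPdf z * binCdf z z (-ρ) := by
  have hρ' : |-ρ| < 1 := by rwa [abs_neg]
  have hcopula : ∫ u in (0 : ℝ)..1, normCopula u (1 - u) ρ =
      ∫ u in (0 : ℝ)..1, binCdf (stdQuantile u) (-stdQuantile u) ρ := by
    simp only [intervalIntegral.integral_of_le zero_le_one, integral_Ioc_eq_integral_Ioo]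
    exact setIntegral_congr_fun measurableSet_Ioo fun u hu => by
      rw [normCopula, stdQuantile_one_sub hu]
  have hhalf : ∫ z, stdPdf z * stdCdf z = 1 / 2 := by
    simpa using integral_stdPdf_mul_comp_stdCdf id
  rw [hcopula, integral_comp_stdQuantile fun z => binCdf z (-z) ρ]
  simp_rw [binCdf_neg_right hρ, mul_sub]
  rw [integral_sub (integrable_stdPdf.mul_bdd (c := 1) (by fun_prop)
    (ae_of_all _ fun _ => norm_stdCdf_le_one _)) (integrable_stdPdf_mul_binCdf_self hρ'), hhalf]

lemma two_mul_arcsin_sqrt_div_two {x : ℝ} (h0 : 0 ≤ x) (h4 : x ≤ 4) :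
    2 * arcsin (√x / 2) = π / 2 - arcsin (1 - x / 2) := by
  have hsqrt : √x / 2 ≤ 1 := by
    rw [div_le_one two_pos, ← sqrt_sq zero_le_two]
    exact sqrt_le_sqrt (by linarith)
  have hsin : sin (arcsin (√x / 2)) = √x / 2 :=
    sin_arcsin (by linarith [sqrt_nonneg x]) hsqrt
  have hcos : cos (2 * arcsin (√x / 2)) = 1 - x / 2 := by
    rw [cos_two_mul, cos_sq', hsin, div_pow, sq_sqrt h0]
    ring
  rw [← arccos_eq_pi_div_two_sub_arcsin, ← hcos, arccos_cos]
  · linarith [arcsin_nonneg.2 (div_nonneg (sqrt_nonneg x) zero_le_two)]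
  · linarith [arcsin_le_pi_div_two (√x / 2)]

lemma arcsin_sub_arcsin_eq {ρ : ℝ} (hρ : |ρ| < 1) :
    arcsin ((1 + ρ) / 2) - arcsin ((1 - ρ) / 2) =
      2 * (arcsin (√(1 + ρ) / 2) - arcsin (√(1 - ρ) / 2)) := by
  obtain ⟨h1, h2⟩ := abs_lt.1 hρ
  rw [mul_sub, two_mul_arcsin_sqrt_div_two (by linarith) (by linarith),
    two_mul_arcsin_sqrt_div_two (by linarith) (by linarith)]
  ring_nf

theorem gini_gamma (ρ : ℝ) (hρ : ρ ∈ Set.Ioo (-1 : ℝ) 1) :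
    4 * ((∫ u in (0 : ℝ)..1, normCopula u u ρ) +
        (∫ u in (0 : ℝ)..1, normCopula u (1 - u) ρ) - 1 / 2) =
      (2 / Real.pi) * (Real.arcsin ((1 + ρ) / 2) - Real.arcsin ((1 - ρ) / 2)) ∧
    4 * ((∫ u in (0 : ℝ)..1, normCopula u u ρ) +
        (∫ u in (0 : ℝ)..1, normCopula u (1 - u) ρ) - 1 / 2) =
      (4 / Real.pi) * (Real.arcsin (Real.sqrt (1 + ρ) / 2) -
        Real.arcsin (Real.sqrt (1 - ρ) / 2)) := by
  have hρ' : |ρ| < 1 := abs_lt.2 hρ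
  have hγ : 4 * ((∫ u in (0 : ℝ)..1, normCopula u u ρ) +
      (∫ u in (0 : ℝ)..1, normCopula u (1 - u) ρ) - 1 / 2) =
      (2 / π) * (arcsin ((1 + ρ) / 2) - arcsin ((1 - ρ) / 2)) := by
    rw [integral_normCopula_self, integral_normCopula_one_sub hρ',
      integral_stdPdf_mul_binCdf_self hρ', integral_stdPdf_mul_binCdf_self (by rwa [abs_neg]),
      ← sub_eq_add_neg]
    field_simp
    ring
  refine ⟨hγ, hγ.trans ?_⟩
  rw [arcsin_sub_arcsin_eq hρ']
  ring
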